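/- arXiv:2401.05193 — 2 statements merged into one kernel-verified Lean document; each statement's English description precedes it below -/
import Mathlib

section
/- Consider a complete binary tree with L levels and 2^L − 1 nodes, with leaf actions a_{L,1}, …, a_{L,2^{L−1}}. Fix ε > 0 and for each root-to-leaf path p define f^{(p)}(a) = 1 if a is the leaf of p, f^{(p)}(a) = 1 − 2ε if a is a non-leaf node on p, and f^{(p)}(a) = 1 − 12ε otherwise. Then the sequence of leaf actions a_{L,1}, …, a_{L,2^{L−1}−1} is an ε-independent sequence for the function class F_tree = {f^{(p)} : p a root-to-leaf path}. Consequently the ε-eluder dimension of F_tree is at least 2^{L−1} − 1. -/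
/-! Two reward functions whose paths end at different leaves agree, with value `1 - 12ε`, at every
third leaf and differ by `12ε` at the leaf of the first path. Comparing the paths ending at leaf `n`
and at the last leaf, leaf `n` is therefore `ε`-independent of the leaves before it. -/

/-- Nodes of a complete binary tree with `L` levels: a node at level `l`
(root is level `0`) is indexed by an element of `Fin (2^l)`. -/
def TreeNode (L : ℕ) := Σ l : Fin L, Fin (2 ^ (l : ℕ))

/-- The reward function `f^{(p)}` associated with the root-to-leaf path `p` ending
at the leaf of index `j`: value `1` at the leaf of the path, `1 - 2ε` at the other
nodes of the path, and `1 - 12ε` at every other node.  The node at level `l` on the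
path to leaf `j` has index `j / 2^(L-1-l)`. -/
noncomputable def fTree (L : ℕ) (ε : ℝ) (j : Fin (2 ^ (L - 1))) (z : TreeNode L) : ℝ :=
  if (z.1 : ℕ) = L - 1 ∧ (z.2 : ℕ) = (j : ℕ) then 1
  else if (z.2 : ℕ) = (j : ℕ) / 2 ^ (L - 1 - (z.1 : ℕ)) then 1 - 2 * ε
  else 1 - 12 * ε

/-- The function class `F_tree`, one function per root-to-leaf path (i.e. per leaf). -/
noncomputable def FTreeClass (L : ℕ) (ε : ℝ) : Set (TreeNode L → ℝ) :=
  {f | ∃ j : Fin (2 ^ (L - 1)), f = fTree L ε j}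

/-- The leaf node (level `L-1`) of index `j`. -/
def leafNode (L : ℕ) (hL : 0 < L) (j : Fin (2 ^ (L - 1))) : TreeNode L :=
  ⟨⟨L - 1, Nat.sub_lt hL one_pos⟩, j⟩

/-- `z` is `ε`-independent of `z_1, …, z_n` w.r.t. `G`: there are `g, g' ∈ G` with
`sqrt(Σᵢ (g zᵢ - g' zᵢ)²) ≤ ε` but `g z - g' z > ε`. -/
def epsIndep {Z : Type*} (G : Set (Z → ℝ)) (ε : ℝ) (z : Z) (zs : List Z) : Prop :=
  ∃ g ∈ G, ∃ g' ∈ G,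
    Real.sqrt ((zs.map fun w => (g w - g' w) ^ 2).sum) ≤ ε ∧ ε < g z - g' z

theorem epsIndep_of_forall_mem_eq {Z : Type*} {G : Set (Z → ℝ)} {ε : ℝ} (hε : 0 ≤ ε)
    {g g' : Z → ℝ} (hg : g ∈ G) (hg' : g' ∈ G) {z : Z} {zs : List Z}
    (hzs : ∀ w ∈ zs, g w = g' w) (hz : ε < g z - g' z) : epsIndep G ε z zs := by
  refine ⟨g, hg, g', hg', ?_, hz⟩
  have hsum : (zs.map fun w => (g w - g' w) ^ 2).sum = 0 :=
    List.sum_eq_zero fun x hx => by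
      obtain ⟨w, hw, rfl⟩ := List.mem_map.mp hx
      simp [hzs w hw]
  rw [hsum, Real.sqrt_zero]
  exact hε

theorem fTree_mem_FTreeClass (L : ℕ) (ε : ℝ) (j : Fin (2 ^ (L - 1))) :
    fTree L ε j ∈ FTreeClass L ε :=
  ⟨j, rfl⟩

theorem fTree_leafNode (L : ℕ) (hL : 0 < L) (ε : ℝ) (j k : Fin (2 ^ (L - 1))) :
    fTree L ε j (leafNode L hL k) = if k = j then 1 else 1 - 12 * ε := by
  by_cases h : k = j <;> simp [fTree, leafNode, Fin.val_inj, h]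

theorem epsIndep_leafNode (L : ℕ) (hL : 0 < L) {ε : ℝ} (hε : 0 < ε) {n : ℕ}
    (hn : n < 2 ^ (L - 1) - 1) {zs : List (TreeNode L)}
    (hzs : ∀ z ∈ zs, ∃ k : Fin (2 ^ (L - 1)), (k : ℕ) < n ∧ z = leafNode L hL k) :
    epsIndep (FTreeClass L ε) ε (leafNode L hL ⟨n, hn.trans_le (Nat.sub_le _ _)⟩) zs := by
  set leaf : Fin (2 ^ (L - 1)) := ⟨n, hn.trans_le (Nat.sub_le _ _)⟩
  set last : Fin (2 ^ (L - 1)) := ⟨2 ^ (L - 1) - 1, by omega⟩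
  have hne : leaf ≠ last := Fin.ne_of_val_ne hn.ne
  refine epsIndep_of_forall_mem_eq hε.le (fTree_mem_FTreeClass L ε leaf)
    (fTree_mem_FTreeClass L ε last) (fun w hw => ?_) ?_
  · obtain ⟨k, hk, rfl⟩ := hzs w hw
    have hk_leaf : k ≠ leaf := Fin.ne_of_val_ne hk.ne
    have hk_last : k ≠ last := Fin.ne_of_val_ne (hk.trans hn).ne
    simp only [fTree_leafNode, hk_leaf, hk_last, if_false]
  · simp only [fTree_leafNode, hne, if_true, if_false]
    linarith

theorem epsIndep_leafNode_ofFn (L : ℕ) (hL : 0 < L) {ε : ℝ} (hε : 0 < ε) {n : ℕ}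
    (hn : n < 2 ^ (L - 1) - 1) :
    epsIndep (FTreeClass L ε) ε (leafNode L hL ⟨n, hn.trans_le (Nat.sub_le _ _)⟩)
      (List.ofFn fun k : Fin n => leafNode L hL ⟨k, (k.2.trans hn).trans_le (Nat.sub_le _ _)⟩) :=
  epsIndep_leafNode L hL hε hn fun _ hz => by
    obtain ⟨k, rfl⟩ := List.mem_ofFn.mp hz
    exact ⟨_, k.2, rfl⟩

/-- the sequence of leaves `a_{L,1}, …, a_{L,2^{L-1}-1}` is an
`ε`-independent sequence for `F_tree`; consequently there is a sequence of length
`2^{L-1} - 1` each of whose elements is `ε`-independent of its predecessors, i.e.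
the `ε`-eluder dimension of `F_tree` is at least `2^{L-1} - 1`. -/
theorem stmt_3 (L : ℕ) (hL : 2 ≤ L) (ε : ℝ) (hε : 0 < ε) :
    (∀ n : ℕ, ∀ hn : n < 2 ^ (L - 1) - 1,
      epsIndep (FTreeClass L ε) ε
        (leafNode L (by omega) ⟨n, hn.trans_le (Nat.sub_le _ _)⟩)
        (List.ofFn fun k : Fin n =>
          leafNode L (by omega) ⟨k, ((k.2.trans hn).trans_le (Nat.sub_le _ _))⟩)) ∧
    ∃ zs : List (TreeNode L), zs.length = 2 ^ (L - 1) - 1 ∧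
      ∀ n : ℕ, ∀ hn : n < zs.length,
        epsIndep (FTreeClass L ε) ε (zs.get ⟨n, hn⟩) (zs.take n) := by
  have hL₀ : 0 < L := by omega
  let leaves : Fin (2 ^ (L - 1) - 1) → TreeNode L := fun k =>
    leafNode L hL₀ ⟨k, k.2.trans_le (Nat.sub_le _ _)⟩
  refine ⟨fun n hn => epsIndep_leafNode_ofFn L hL₀ hε hn, List.ofFn leaves, List.length_ofFn,
    fun n hn => ?_⟩
  rw [List.length_ofFn] at hn
  rw [List.get_ofFn, ← Fin.ofFn_take_eq_take_ofFn hn.le]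
  exact epsIndep_leafNode_ofFn L hL₀ hε hn
end

section
/- Let P be a probability distribution on contexts X, A a finite action set, and f⋆, f̂ : X × A → ℝ bounded measurable functions with greedy policy π̂(x) ∈ argmax_a f̂(x,a). Then E_{x∼P}[ max_a f⋆(x,a) − f⋆(x, π̂(x)) ] ≤ 2·sqrt( |A| · E_{x∼P, a∼Uniform(A)}[ (f⋆(x,a) − f̂(x,a))² ] ). -/
open MeasureTheory

/-!
If `f̂` is uniformly `ε`-close to `f⋆` at `x`, the greedy action for `f̂` loses at most `2ε` against
the best action for `f⋆`. Taking for `ε` the Euclidean norm `√(Σ_a (f⋆ - f̂)²)` of the error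
vector, which dominates each coordinate, and then Jensen's inequality for the concave `√` bounds
the expected regret by `2 √(E_x Σ_a (f⋆ - f̂)²)`; the factor `|A|` cancels
the normalisation of the uniform distribution on actions.
-/

lemma Finset.sup'_sub_le_two_mul_of_abs_sub_le {ι : Type*} {s : Finset ι} (hs : s.Nonempty)
    {f g : ι → ℝ} {i : ι} (his : i ∈ s) (hi : ∀ a ∈ s, g a ≤ g i) {ε : ℝ}
    (hε : ∀ a ∈ s, |f a - g a| ≤ ε) : s.sup' hs f - f i ≤ 2 * ε := by
  rw [sub_le_iff_le_add]
  refine Finset.sup'_le hs f fun a ha => ?_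
  have hfa := (abs_le.1 (hε a ha)).2
  have hfi := (abs_le.1 (hε i his)).1
  linarith [hi a ha]

lemma abs_le_sqrt_sum_sq {ι : Type*} [Fintype ι] (z : ι → ℝ) (b : ι) :
    |z b| ≤ √(∑ a, z a ^ 2) :=
  Real.abs_le_sqrt <|
    Finset.single_le_sum (fun a _ => sq_nonneg (z a)) (Finset.mem_univ b)

namespace MeasureTheory

variable {α : Type*} [MeasurableSpace α] {μ : Measure α} {h : α → ℝ}

lemma Integrable.sqrt [IsFiniteMeasure μ] (hi : Integrable h μ) (h0 : 0 ≤ᵐ[μ] h) :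
    Integrable (fun x => √(h x)) μ := by
  have hmeas : AEStronglyMeasurable (fun x => √(h x)) μ :=
    Real.continuous_sqrt.comp_aestronglyMeasurable hi.aestronglyMeasurable
  have hsq : Integrable (fun x => √(h x) ^ 2) μ :=
    hi.congr (h0.mono fun x hx => (Real.sq_sqrt hx).symm)
  exact ((memLp_two_iff_integrable_sq hmeas).2 hsq).integrable one_le_two

lemma integral_sqrt_le_sqrt_integral [IsProbabilityMeasure μ] (hi : Integrable h μ)
    (h0 : 0 ≤ᵐ[μ] h) : ∫ x, √(h x) ∂μ ≤ √(∫ x, h x ∂μ) :=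
  Real.strictConcaveOn_sqrt.concaveOn.le_map_integral Real.continuous_sqrt.continuousOn
    isClosed_Ici h0 hi (hi.sqrt h0)

end MeasureTheory

theorem stmt_6_general {X : Type*} [MeasurableSpace X] {A : Type*} [Fintype A] [Nonempty A]
    (P : Measure X) [IsProbabilityMeasure P]
    (fstar fhat : X → A → ℝ) (pihat : X → A)
    (C : ℝ) (hbound : ∀ x a, |fstar x a| ≤ C ∧ |fhat x a| ≤ C)
    (hm1 : ∀ a, Measurable fun x => fstar x a)
    (hm2 : ∀ a, Measurable fun x => fhat x a)
    (hhat : ∀ x a, fhat x a ≤ fhat x (pihat x)) :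
    (∫ x, ((Finset.univ.sup' Finset.univ_nonempty fun a => fstar x a)
        - fstar x (pihat x)) ∂P)
      ≤ 2 * Real.sqrt ((Fintype.card A : ℝ) *
          ((Fintype.card A : ℝ)⁻¹ * ∫ x, ∑ a, (fstar x a - fhat x a) ^ 2 ∂P)) := by
  set err : X → ℝ := fun x => ∑ a, (fstar x a - fhat x a) ^ 2
  have hmemLp (u : X → A → ℝ) (hu : ∀ a, Measurable fun x => u x a) (hC : ∀ x a, |u x a| ≤ C)
      (a : A) : MemLp (fun x => u x a) 2 P :=
    MemLp.of_bound (hu a).aestronglyMeasurable C (ae_of_all _ fun x => hC x a)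
  have herr_int : Integrable err P := integrable_finsetSum _ fun a _ =>
    ((hmemLp fstar hm1 (fun x a => (hbound x a).1) a).sub
      (hmemLp fhat hm2 (fun x a => (hbound x a).2) a)).integrable_sq
  have herr_nonneg : 0 ≤ᵐ[P] err :=
    ae_of_all _ fun x => Finset.sum_nonneg fun a _ => sq_nonneg _
  have hregret (x : X) : (Finset.univ.sup' Finset.univ_nonempty fun a => fstar x a)
      - fstar x (pihat x) ≤ 2 * √(err x) :=
    Finset.sup'_sub_le_two_mul_of_abs_sub_le _ (Finset.mem_univ _) (fun a _ => hhat x a)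
      (fun a _ => abs_le_sqrt_sum_sq (fun b => fstar x b - fhat x b) a)
  have hcard : (Fintype.card A : ℝ) ≠ 0 := Nat.cast_ne_zero.2 Fintype.card_ne_zero
  rw [mul_inv_cancel_left₀ hcard]
  calc (∫ x, ((Finset.univ.sup' Finset.univ_nonempty fun a => fstar x a)
        - fstar x (pihat x)) ∂P)
      ≤ ∫ x, 2 * √(err x) ∂P :=
        integral_mono_of_nonneg
          (ae_of_all _ fun x => sub_nonneg.2 (Finset.le_sup' _ (Finset.mem_univ (pihat x))))
          ((herr_int.sqrt herr_nonneg).const_mul 2) (ae_of_all _ hregret)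
    _ = 2 * ∫ x, √(err x) ∂P := integral_const_mul 2 _
    _ ≤ 2 * √(∫ x, err x ∂P) := by
        gcongr
        exact integral_sqrt_le_sqrt_integral herr_int herr_nonneg

/-- for a context distribution `P`, a finite action set `A`, bounded
measurable `f⋆, f̂ : X × A → ℝ` and the greedy policy `π̂` for `f̂`,
`E_{x∼P}[ max_a f⋆(x,a) - f⋆(x, π̂(x)) ]
  ≤ 2 √( |A| · E_{x∼P, a∼Uniform(A)}[ (f⋆(x,a) - f̂(x,a))² ] )`,
where `E_{x∼P, a∼Uniform(A)}[g] = (1/|A|) E_{x∼P}[ Σ_a g(x,a) ]`. -/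
theorem stmt_6 {X : Type*} [MeasurableSpace X] {A : Type*} [Fintype A] [Nonempty A]
    [MeasurableSpace A] [MeasurableSingletonClass A]
    (P : Measure X) [IsProbabilityMeasure P]
    (fstar fhat : X → A → ℝ) (pihat : X → A)
    (C : ℝ) (hbound : ∀ x a, |fstar x a| ≤ C ∧ |fhat x a| ≤ C)
    (hm1 : ∀ a, Measurable fun x => fstar x a)
    (hm2 : ∀ a, Measurable fun x => fhat x a)
    (hmp : Measurable pihat)
    (hhat : ∀ x a, fhat x a ≤ fhat x (pihat x)) :
    (∫ x, ((Finset.univ.sup' Finset.univ_nonempty fun a => fstar x a)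
        - fstar x (pihat x)) ∂P)
      ≤ 2 * Real.sqrt ((Fintype.card A : ℝ) *
          ((Fintype.card A : ℝ)⁻¹ * ∫ x, ∑ a, (fstar x a - fhat x a) ^ 2 ∂P)) :=
  stmt_6_general P fstar fhat pihat C hbound hm1 hm2 hhat
end
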